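/- arXiv:2011.05953 — 2 statements merged into one kernel-verified Lean document; each statement's English description precedes it below -/
import Mathlib

section
/- Let f ∈ F₁(a,b), let P be a probability measure on (Ω,M), and let g ∈ M_b(Ω). Then sup over h ∈ M_b(Ω) with E_P[h] = 1 and E_P[f(h)] < ∞ of {E_P[g·h] − E_P[f(h)]} equals inf_{ν∈ℝ}{ν + E_P[f*(g−ν)]}. -/
open MeasureTheory Filter Set Topology ENNReal
open scoped Classical

noncomputable section

/-- The set of bounded measurable real-valued functions on `Ω`. -/
def Mb (Ω : Type*) [MeasurableSpace Ω] : Set (Ω → ℝ) :=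
  {g | Measurable g ∧ ∃ C : ℝ, ∀ x, |g x| ≤ C}

/-- The set of bounded continuous real-valued functions on `S`. -/
def Cb (S : Type*) [TopologicalSpace S] : Set (S → ℝ) :=
  {g | Continuous g ∧ ∃ C : ℝ, ∀ x, |g x| ≤ C}

/-- The positive part of an extended real number, as an element of `ℝ≥0∞`. -/
def posE (x : EReal) : ℝ≥0∞ := if x = ⊤ then ⊤ else ENNReal.ofReal x.toReal

/-- The extended-real-valued integral of an `EReal`-valued function, defined as the
difference of the lower integrals of the positive and negative parts, with the
convention `∞ - ∞ = -∞`. -/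
def eIntegral {Ω : Type*} [MeasurableSpace Ω] (P : Measure Ω) (h : Ω → EReal) : EReal :=
  ((∫⁻ x, posE (h x) ∂P : ℝ≥0∞) : EReal) - ((∫⁻ x, posE (-(h x)) ∂P : ℝ≥0∞) : EReal)

/-- The Legendre transform `f*(y) = sup_x {x*y - f(x)}` of `f : ℝ → (-∞,∞]`. -/
def fstar (f : ℝ → EReal) (y : ℝ) : EReal := ⨆ x : ℝ, (((x * y : ℝ) : EReal) - f x)

/-- `f : ℝ → (-∞,∞]` is (the convex LSC extension of) an element of `F₁(a,b)`:
convex, lower semicontinuous, never `-∞`, finite exactly on the interval `(a,b)`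
(with `+∞` strictly outside `[a,b]`), and `f(1) = 0` with `a < 1 < b`. -/
structure IsF1 (a b : EReal) (f : ℝ → EReal) : Prop where
  a_lt_one : a < ((1 : ℝ) : EReal)
  one_lt_b : ((1 : ℝ) : EReal) < b
  convex : ∀ x y t : ℝ, 0 < t → t < 1 →
    f (t * x + (1 - t) * y) ≤ ((t : ℝ) : EReal) * f x + (((1 - t : ℝ)) : EReal) * f y
  lsc : LowerSemicontinuous f
  ne_bot : ∀ x, f x ≠ ⊥
  finite_on : ∀ x : ℝ, a < (x : EReal) → (x : EReal) < b → f x ≠ ⊤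
  top_outside : ∀ x : ℝ, ((x : EReal) < a ∨ b < (x : EReal)) → f x = ⊤
  at_one : f 1 = 0

/-- `Λ_f^P[g] = inf_{ν ∈ ℝ} {ν + E_P[f*(g - ν)]}`. -/
def LambdaF {Ω : Type*} [MeasurableSpace Ω] (f : ℝ → EReal) (P : Measure Ω) (g : Ω → ℝ) :
    EReal :=
  ⨅ ν : ℝ, ((ν : EReal) + eIntegral P (fun x => fstar f (g x - ν)))

/-- The classical `f`-divergence `D_f(Q‖P) = E_P[f(dQ/dP)]` if `Q ≪ P`, else `∞`. -/
def fDivE {Ω : Type*} [MeasurableSpace Ω] (f : ℝ → EReal) (Q P : Measure Ω) : EReal :=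
  if Q ≪ P then eIntegral P (fun x => f ((Q.rnDeriv P x).toReal)) else ⊤

/-- The `(f,Γ)`-divergence `D_f^Γ(Q‖P) = sup_{g ∈ Γ} {E_Q[g] - Λ_f^P[g]}`. -/
def fGammaDiv {Ω : Type*} [MeasurableSpace Ω] (f : ℝ → EReal) (Γ : Set (Ω → ℝ))
    (Q P : Measure Ω) : EReal :=
  ⨆ g ∈ Γ, (((∫ x, g x ∂Q : ℝ) : EReal) - LambdaF f P g)

/-- The `Γ`-IPM `W^Γ(Q,P) = sup_{g ∈ Γ} {E_Q[g] - E_P[g]}`. -/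
def ipmW {Ω : Type*} [MeasurableSpace Ω] (Γ : Set (Ω → ℝ)) (Q P : Measure Ω) : EReal :=
  ⨆ g ∈ Γ, (((∫ x, g x ∂Q : ℝ) : EReal) - ((∫ x, g x ∂P : ℝ) : EReal))

end

/-!
Weak duality is Young's inequality `x y - f x ≤ f* y` integrated against `P`.

For the converse, `h ↦ E_P[g h] - E_P[f(h)]` is concave on the bounded measurable `h` with
`E_P[f(h)] < ∞`, and `h ↦ E_P[h]` is affine there. Since `1` is interior to the domain of `f`,
constant functions move `E_P[h]` to both sides of `1`, so the constrained supremum `S` has a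
Lagrange multiplier `ν`: `E_P[(g - ν) h - f(h)] ≤ S - ν` for every such `h`. The supremum of the
left side over `h` is `E_P[f*(g - ν)]`: by convexity along chords to `1`, `f*` is already a
supremum over the rational points of the domain of `f`, a measurable argmax over the first `N`
of them gives an admissible `h`, and monotone convergence lets `N → ∞`.
-/

namespace Mb

variable {Ω : Type*} [MeasurableSpace Ω] {g h : Ω → ℝ}

lemma const_mem (c : ℝ) : (fun _ : Ω => c) ∈ Mb Ω :=
  ⟨measurable_const, |c|, fun _ => le_rfl⟩

lemma add_mem (hg : g ∈ Mb Ω) (hh : h ∈ Mb Ω) : g + h ∈ Mb Ω := by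
  obtain ⟨mg, C, hC⟩ := hg
  obtain ⟨mh, D, hD⟩ := hh
  exact ⟨mg.add mh, C + D, fun x => (abs_add_le _ _).trans (add_le_add (hC x) (hD x))⟩

lemma sub_mem (hg : g ∈ Mb Ω) (hh : h ∈ Mb Ω) : g - h ∈ Mb Ω := by
  obtain ⟨mg, C, hC⟩ := hg
  obtain ⟨mh, D, hD⟩ := hh
  exact ⟨mg.sub mh, C + D, fun x => (abs_sub _ _).trans (add_le_add (hC x) (hD x))⟩

lemma mul_mem (hg : g ∈ Mb Ω) (hh : h ∈ Mb Ω) : g * h ∈ Mb Ω := by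
  obtain ⟨mg, C, hC⟩ := hg
  obtain ⟨mh, D, hD⟩ := hh
  refine ⟨mg.mul mh, C * D, fun x => ?_⟩
  rw [Pi.mul_apply, abs_mul]
  exact mul_le_mul (hC x) (hD x) (abs_nonneg _) ((abs_nonneg _).trans (hC x))

lemma smul_mem (c : ℝ) (hg : g ∈ Mb Ω) : c • g ∈ Mb Ω :=
  mul_mem (const_mem c) hg

lemma comp_of_le {σ : Ω → ℕ} (hσ : Measurable σ) {N : ℕ} (hσN : ∀ x, σ x ≤ N) (r : ℕ → ℝ) :
    (fun x => r (σ x)) ∈ Mb Ω :=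
  ⟨measurable_from_nat.comp hσ, ∑ n ∈ Finset.range (N + 1), |r n|, fun x =>
    Finset.single_le_sum (fun n _ => abs_nonneg (r n))
      (Finset.mem_range.2 (Nat.lt_succ_of_le (hσN x)))⟩

lemma integrable {P : Measure Ω} [IsFiniteMeasure P] (hg : g ∈ Mb Ω) : Integrable g P := by
  obtain ⟨mg, C, hC⟩ := hg
  exact Integrable.of_bound mg.aestronglyMeasurable C (ae_of_all _ hC)

end Mb

lemma ENNReal.coe_iSup_sub_coe_iInf_le {A B : ℕ → ℝ≥0∞} (hA : Monotone A) (hB : Antitone B)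
    (hA_top : ∀ N, A N ≠ ⊤) (hB_top : ∀ N, B N ≠ ⊤) {c : ℝ}
    (hc : ∀ N, (A N).toReal - (B N).toReal ≤ c) :
    ((⨆ N, A N : ℝ≥0∞) : EReal) - ((⨅ N, B N : ℝ≥0∞) : EReal) ≤ c := by
  have hB_inf : (⨅ N, B N) ≠ ⊤ := ne_top_of_le_ne_top (hB_top 0) (iInf_le _ 0)
  set b := (⨅ N, B N).toReal
  have hAN : ∀ N, (A N).toReal ≤ c + b := by
    intro N
    have : (A N).toReal - c ≤ ⨅ M, (B M).toReal := le_ciInf fun M => by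
      have := hc (max N M)
      have := ENNReal.toReal_mono (hA_top _) (hA (le_max_left N M))
      have := ENNReal.toReal_mono (hB_top M) (hB (le_max_right N M))
      linarith
    rw [← ENNReal.toReal_iInf hB_top] at this
    linarith
  have hA_sup : (⨆ N, A N) ≤ ENNReal.ofReal (c + b) :=
    iSup_le fun N => (ENNReal.le_ofReal_iff_toReal_le (hA_top N)
      (toReal_nonneg.trans (hAN N))).2 (hAN N)
  have hA_sup_top : (⨆ N, A N) ≠ ⊤ := ne_top_of_le_ne_top ofReal_ne_top hA_sup
  rw [← EReal.coe_ennreal_toReal hA_sup_top, ← EReal.coe_ennreal_toReal hB_inf, ← EReal.coe_sub,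
    EReal.coe_le_coe_iff]
  have := (ENNReal.le_ofReal_iff_toReal_le hA_sup_top (toReal_nonneg.trans (hAN 0))).1 hA_sup
  linarith

section eIntegral

variable {Ω : Type*} [MeasurableSpace Ω] {P : Measure Ω} {F G : Ω → EReal}

-- `posE` is `EReal.toENNReal`
lemma eIntegral_eq_toENNReal (F : Ω → EReal) : eIntegral P F =
    ((∫⁻ x, (F x).toENNReal ∂P : ℝ≥0∞) : EReal) - ((∫⁻ x, (-F x).toENNReal ∂P : ℝ≥0∞) : EReal) :=
  rfl

lemma eIntegral_mono_ae (h : F ≤ᵐ[P] G) : eIntegral P F ≤ eIntegral P G := by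
  rw [eIntegral_eq_toENNReal, eIntegral_eq_toENNReal]
  refine EReal.sub_le_sub (EReal.coe_ennreal_le_coe_ennreal_iff.2 ?_)
    (EReal.coe_ennreal_le_coe_ennreal_iff.2 ?_) <;>
  refine lintegral_mono_ae (h.mono fun x hx => EReal.toENNReal_le_toENNReal ?_)
  exacts [hx, EReal.neg_le_neg_iff.2 hx]

lemma eIntegral_congr_ae (h : F =ᵐ[P] G) : eIntegral P F = eIntegral P G :=
  (eIntegral_mono_ae h.le).antisymm (eIntegral_mono_ae h.symm.le)

lemma eIntegral_coe {u : Ω → ℝ} (hu : Integrable u P) :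
    eIntegral P (fun x => (u x : EReal)) = ((∫ x, u x ∂P : ℝ) : EReal) := by
  rw [eIntegral_eq_toENNReal, integral_eq_lintegral_pos_part_sub_lintegral_neg_part hu,
    EReal.coe_sub, EReal.coe_ennreal_toReal hu.lintegral_lt_top.ne,
    EReal.coe_ennreal_toReal (by simpa using hu.neg.lintegral_lt_top.ne)]
  simp [← EReal.coe_neg]

lemma eIntegral_const [IsProbabilityMeasure P] (c : ℝ) :
    eIntegral P (fun _ => (c : EReal)) = c := by
  simp [eIntegral_coe (integrable_const c)]

lemma eIntegral_iSup_le {u : ℕ → Ω → ℝ} (hu : ∀ N, Integrable (u N) P)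
    (hmono : ∀ x, Monotone fun N => u N x) {c : ℝ} (hc : ∀ N, ∫ x, u N x ∂P ≤ c) :
    eIntegral P (fun x => ⨆ N, (u N x : EReal)) ≤ c := by
  have hpos : ∀ x, (⨆ N, (u N x : EReal)).toENNReal = ⨆ N, ENNReal.ofReal (u N x) := fun x =>
    Monotone.map_iSup_of_continuousAt EReal.continuous_toENNReal.continuousAt
      (fun _ _ h => EReal.toENNReal_le_toENNReal h) EReal.toENNReal_bot
  have hneg : ∀ x, (-⨆ N, (u N x : EReal)).toENNReal = ⨅ N, ENNReal.ofReal (-u N x) := by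
    intro x
    refine (Antitone.map_iSup_of_continuousAt (f := fun y : EReal => (-y).toENNReal)
      (EReal.continuous_toENNReal.comp continuous_neg).continuousAt
      (fun _ _ h => EReal.toENNReal_le_toENNReal (EReal.neg_le_neg_iff.2 h)) ?_).trans ?_
    · simp
    · simp [← EReal.coe_neg]
  rw [eIntegral_eq_toENNReal]
  simp only [hpos, hneg]
  rw [lintegral_iSup' (fun N => (hu N).aemeasurable.ennreal_ofReal)
      (ae_of_all _ fun x _ _ h => ENNReal.ofReal_le_ofReal (hmono x h)),
    lintegral_iInf' (f := fun N x => ENNReal.ofReal (-u N x))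
      (fun N => (hu N).aemeasurable.neg.ennreal_ofReal)
      (ae_of_all _ fun x _ _ h => ENNReal.ofReal_le_ofReal (neg_le_neg (hmono x h)))
      (hu 0).neg.lintegral_lt_top.ne]
  refine ENNReal.coe_iSup_sub_coe_iInf_le
    (fun _ _ h => lintegral_mono fun x => ENNReal.ofReal_le_ofReal (hmono x h))
    (fun _ _ h => lintegral_mono fun x => ENNReal.ofReal_le_ofReal (neg_le_neg (hmono x h)))
    (fun N => (hu N).lintegral_lt_top.ne) (fun N => (hu N).neg.lintegral_lt_top.ne) fun N => ?_
  rw [← integral_eq_lintegral_pos_part_sub_lintegral_neg_part (hu N)]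
  exact hc N

variable [IsFiniteMeasure P] {L : ℝ}

lemma lintegral_neg_toENNReal_ne_top (hL : ∀ x, (L : EReal) ≤ F x) :
    ∫⁻ x, (-F x).toENNReal ∂P ≠ ⊤ := by
  refine ne_top_of_le_ne_top (lintegral_const_lt_top (μ := P) (ofReal_ne_top (r := -L))).ne
    (lintegral_mono fun x => ?_)
  simpa using EReal.toENNReal_le_toENNReal (EReal.neg_le_neg_iff.2 (hL x))

lemma lintegral_toENNReal_ne_top_of_eIntegral_lt_top (hL : ∀ x, (L : EReal) ≤ F x)
    (hlt : eIntegral P F < ⊤) : ∫⁻ x, (F x).toENNReal ∂P ≠ ⊤ := by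
  intro hA
  rw [eIntegral_eq_toENNReal, hA, ← EReal.coe_ennreal_toReal (lintegral_neg_toENNReal_ne_top hL)]
    at hlt
  simp at hlt

lemma ae_ne_top_of_eIntegral_lt_top (hF : Measurable F) (hL : ∀ x, (L : EReal) ≤ F x)
    (hlt : eIntegral P F < ⊤) : ∀ᵐ x ∂P, F x ≠ ⊤ := by
  have hA := lintegral_toENNReal_ne_top_of_eIntegral_lt_top hL hlt
  filter_upwards [ae_lt_top hF.ereal_toENNReal hA] with x hx
  exact EReal.toENNReal_ne_top_iff.1 hx.ne

lemma integrable_toReal_of_eIntegral_lt_top (hF : Measurable F) (hL : ∀ x, (L : EReal) ≤ F x)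
    (hlt : eIntegral P F < ⊤) : Integrable (fun x => (F x).toReal) P := by
  refine ⟨(measurable_ereal_toReal.comp hF).aestronglyMeasurable, ?_⟩
  have hA := lintegral_toENNReal_ne_top_of_eIntegral_lt_top hL hlt
  refine lt_of_le_of_lt (lintegral_mono_ae ?_) (lintegral_add_left hF.ereal_toENNReal _ ▸
    ENNReal.add_lt_top.2 ⟨hA.lt_top, (lintegral_neg_toENNReal_ne_top hL).lt_top⟩)
  filter_upwards [ae_ne_top_of_eIntegral_lt_top hF hL hlt] with x hx
  lift F x to ℝ using ⟨hx, ne_bot_of_le_ne_bot (EReal.coe_ne_bot L) (hL x)⟩ with r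
  rw [Real.enorm_eq_ofReal_abs, EReal.toReal_coe, ← EReal.coe_neg, EReal.real_coe_toENNReal,
    EReal.real_coe_toENNReal]
  rcases le_total 0 r with hr | hr
  · simp [abs_of_nonneg hr]
  · simp [abs_of_nonpos hr]

lemma eIntegral_eq_integral_toReal (hF : Measurable F) (hL : ∀ x, (L : EReal) ≤ F x)
    (hlt : eIntegral P F < ⊤) : eIntegral P F = ((∫ x, (F x).toReal ∂P : ℝ) : EReal) := by
  rw [← eIntegral_coe (integrable_toReal_of_eIntegral_lt_top hF hL hlt)]
  refine eIntegral_congr_ae ((ae_ne_top_of_eIntegral_lt_top hF hL hlt).mono fun x hx => ?_)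
  exact (EReal.coe_toReal hx (ne_bot_of_le_ne_bot (EReal.coe_ne_bot L) (hL x))).symm

end eIntegral

lemma exists_measurable_argmax {Ω β : Type*} [MeasurableSpace Ω] [LinearOrder β]
    [TopologicalSpace β] [OrderClosedTopology β] [SecondCountableTopology β] [MeasurableSpace β]
    [OpensMeasurableSpace β] {φ : ℕ → Ω → β}
    (hφ : ∀ n, Measurable (φ n)) (N : ℕ) :
    ∃ σ : Ω → ℕ, Measurable σ ∧ ∀ x, σ x ≤ N ∧ ∀ n ≤ N, φ n x ≤ φ (σ x) x := by
  induction N with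
  | zero => exact ⟨fun _ => 0, measurable_const, fun x => ⟨le_rfl, fun n hn => by
      rw [Nat.le_zero.1 hn]⟩⟩
  | succ N ih =>
    obtain ⟨σ, hσm, hσ⟩ := ih
    have hφσ : Measurable fun x => φ (σ x) x :=
      (measurable_from_prod_countable_left (f := fun p : Ω × ℕ => φ p.2 p.1) hφ).comp
        (measurable_id.prodMk hσm)
    refine ⟨fun x => if φ (σ x) x < φ (N + 1) x then N + 1 else σ x,
      Measurable.ite (measurableSet_lt hφσ (hφ _)) measurable_const hσm, fun x => ?_⟩
    obtain ⟨hσN, hσmax⟩ := hσ x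
    dsimp only
    split_ifs with hlt
    · refine ⟨le_rfl, fun n hn => ?_⟩
      rcases Nat.of_le_succ hn with hn | rfl
      exacts [(hσmax n hn).trans hlt.le, le_rfl]
    · refine ⟨hσN.trans N.le_succ, fun n hn => ?_⟩
      rcases Nat.of_le_succ hn with hn | rfl
      exacts [hσmax n hn, not_lt.1 hlt]

theorem ConcaveOn.exists_le_add_mul {E : Type*} [AddCommGroup E] [Module ℝ E] {K : Set E}
    {v m : E → ℝ} (hv : ConcaveOn ℝ K v)
    (hm : ∀ x ∈ K, ∀ y ∈ K, ∀ α β : ℝ, 0 ≤ α → 0 ≤ β → α + β = 1 →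
      m (α • x + β • y) = α * m x + β * m y)
    {S : ℝ} (hS : ∀ x ∈ K, m x = 0 → v x ≤ S) {x₀ x₁ : E} (hx₀ : x₀ ∈ K) (hx₁ : x₁ ∈ K)
    (hm₀ : m x₀ < 0) (hm₁ : 0 < m x₁) :
    ∃ ν : ℝ, ∀ x ∈ K, v x ≤ S + ν * m x := by
  -- concavity at the combination of `p` and `q` where `m` vanishes: every slope of `v` right of
  -- the constraint is at most every slope left of it
  have cross : ∀ p ∈ K, ∀ q ∈ K, m p < 0 → 0 < m q → (v q - S) * -m p ≤ (S - v p) * m q := by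
    intro p hp q hq hp0 hq0
    have hd : 0 < m q - m p := by linarith
    set α := m q / (m q - m p)
    set β := -m p / (m q - m p)
    have hα : 0 ≤ α := div_nonneg hq0.le hd.le
    have hβ : 0 ≤ β := div_nonneg (by linarith) hd.le
    have hαβ : α + β = 1 := by simp only [α, β]; field_simp; ring
    have hzero : m (α • p + β • q) = 0 := by
      rw [hm p hp q hq α β hα hβ hαβ]; simp only [α, β]; field_simp; ring
    have hle := (hv.2 hp hq hα hβ hαβ).trans (hS _ (hv.1 hp hq hα hβ hαβ) hzero)
    rw [smul_eq_mul, smul_eq_mul] at hle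
    have : m q * v p + -m p * v q ≤ (m q - m p) * S := by
      calc m q * v p + -m p * v q = (m q - m p) * (α * v p + β * v q) := by
            simp only [α, β]; field_simp
        _ ≤ (m q - m p) * S := mul_le_mul_of_nonneg_left hle hd.le
    linear_combination this
  set slopes := (fun q => (v q - S) / m q) '' {q | q ∈ K ∧ 0 < m q}
  have hbdd : BddAbove slopes := ⟨(S - v x₀) / -m x₀, by
    rintro _ ⟨q, ⟨hq, hq0⟩, rfl⟩
    rw [div_le_div_iff₀ hq0 (neg_pos.2 hm₀)]
    exact cross x₀ hx₀ q hq hm₀ hq0⟩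
  refine ⟨sSup slopes, fun x hx => ?_⟩
  rcases lt_trichotomy (m x) 0 with hx0 | hx0 | hx0
  · have : sSup slopes ≤ (S - v x) / -m x := csSup_le ⟨_, x₁, ⟨hx₁, hm₁⟩, rfl⟩ <| by
      rintro _ ⟨q, ⟨hq, hq0⟩, rfl⟩
      rw [div_le_div_iff₀ hq0 (neg_pos.2 hx0)]
      exact cross x hx q hq hx0 hq0
    rw [le_div_iff₀ (neg_pos.2 hx0)] at this
    linarith
  · rw [hx0, mul_zero, add_zero]
    exact hS x hx hx0
  · have := le_csSup hbdd ⟨x, ⟨hx, hx0⟩, rfl⟩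
    rw [div_le_iff₀ hx0] at this
    linarith

def admissible {Ω : Type*} [MeasurableSpace Ω] (f : ℝ → EReal) (P : Measure Ω) : Set (Ω → ℝ) :=
  {h | h ∈ Mb Ω ∧ eIntegral P (fun x => f (h x)) < ⊤}

namespace IsF1

variable {a b : EReal} {f : ℝ → EReal}

lemma apply_combo_le (hf : IsF1 a b f) {x y : ℝ} (hx : f x ≠ ⊤) (hy : f y ≠ ⊤) {α β : ℝ}
    (hα : 0 ≤ α) (hβ : 0 ≤ β) (hαβ : α + β = 1) :
    f (α * x + β * y) ≤ ((α * (f x).toReal + β * (f y).toReal : ℝ) : EReal) := by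
  have hx' := EReal.coe_toReal hx (hf.ne_bot x)
  have hy' := EReal.coe_toReal hy (hf.ne_bot y)
  rcases hα.eq_or_lt with rfl | hα
  · obtain rfl : β = 1 := by linarith
    simp [hy']
  rcases hβ.eq_or_lt with rfl | hβ
  · obtain rfl : α = 1 := by linarith
    simp [hx']
  obtain rfl : β = 1 - α := by linarith
  have := hf.convex x y α hα (by linarith)
  rwa [← hx', ← hy', ← EReal.coe_mul, ← EReal.coe_mul, ← EReal.coe_add] at this

lemma exists_rat_lt (hf : IsF1 a b f) {x y z : ℝ} (hx : f x ≠ ⊤)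
    (hz : (z : EReal) < ((x * y : ℝ) : EReal) - f x) :
    ∃ q : ℚ, f q ≠ ⊤ ∧ (z : EReal) < ((q * y : ℝ) : EReal) - f q := by
  set T := (f x).toReal
  have hxT : f x = T := (EReal.coe_toReal hx (hf.ne_bot x)).symm
  rw [hxT, ← EReal.coe_sub, EReal.coe_lt_coe_iff] at hz
  rcases eq_or_ne x 1 with rfl | hx1
  · exact ⟨1, by simp [hf.at_one], by simpa [hf.at_one, T] using hz⟩
  have hx1' : 1 - x ≠ 0 := sub_ne_zero.2 (Ne.symm hx1)
  -- the chord bound `f q ≤ (1 - q) / (1 - x) * f x` for `q` between `x` and `1`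
  set ℓ : ℝ → ℝ := fun q => q * y - (1 - q) / (1 - x) * T
  have hℓ : IsOpen {q | z < ℓ q} := isOpen_lt continuous_const (by fun_prop)
  have hU : IsOpen ({q | z < ℓ q} ∩ openSegment ℝ x 1) :=
    hℓ.inter (by rw [openSegment_eq_Ioo' hx1]; exact isOpen_Ioo)
  have hUne : ({q | z < ℓ q} ∩ openSegment ℝ x 1).Nonempty := by
    refine mem_closure_iff_nhds.1 (segment_subset_closure_openSegment (left_mem_segment ℝ x 1)) _
      (hℓ.mem_nhds ?_)
    simpa [ℓ, div_self hx1'] using hz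
  obtain ⟨q, hzq, α, β, hα, hβ, hαβ, hq⟩ := Rat.denseRange_cast.exists_mem_open hU hUne
  rw [smul_eq_mul, smul_eq_mul, mul_one] at hq
  have hαq : α = (1 - q) / (1 - x) := by
    rw [eq_div_iff hx1', ← hq]
    linear_combination hαβ
  have hfq := hf.apply_combo_le hx (y := 1) (by simp [hf.at_one]) hα.le hβ.le hαβ
  rw [mul_one, hq, hf.at_one, EReal.toReal_zero, mul_zero, add_zero] at hfq
  refine ⟨q, ne_top_of_le_ne_top (EReal.coe_ne_top _) hfq, ?_⟩
  calc (z : EReal) < ((q * y - α * T : ℝ) : EReal) := by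
        rw [EReal.coe_lt_coe_iff, hαq]; exact hzq
    _ ≤ ((q * y : ℝ) : EReal) - f q := by
        rw [EReal.coe_sub]; exact EReal.sub_le_sub le_rfl hfq

lemma fstar_eq_iSup_rat (hf : IsF1 a b f) (y : ℝ) :
    fstar f y = ⨆ q : {q : ℚ // f q ≠ ⊤}, ((q * y : ℝ) : EReal) - f q := by
  refine le_antisymm (iSup_le fun x => ?_)
    (iSup_le fun q => le_iSup (fun x : ℝ => ((x * y : ℝ) : EReal) - f x) q)
  rcases eq_or_ne (f x) ⊤ with hx | hx
  · simp [hx]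
  refine le_of_forall_lt fun c hc => ?_
  obtain ⟨z, hcz, hz⟩ := EReal.lt_iff_exists_real_btwn.1 hc
  obtain ⟨q, hq, hzq⟩ := hf.exists_rat_lt hx hz
  exact hcz.trans (hzq.trans_le
    (le_iSup (fun q : {q : ℚ // f q ≠ ⊤} => ((q * y : ℝ) : EReal) - f q) ⟨q, hq⟩))

lemma exists_seq_iSup_eq_fstar {Ω : Type*} [MeasurableSpace Ω] {w : Ω → ℝ} (hf : IsF1 a b f)
    (hw : w ∈ Mb Ω) :
    ∃ k : ℕ → Ω → ℝ,
      (∀ N, k N ∈ Mb Ω ∧ (fun x => (f (k N x)).toReal) ∈ Mb Ω ∧ ∀ x, f (k N x) ≠ ⊤) ∧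
      (∀ x, Monotone fun N => w x * k N x - (f (k N x)).toReal) ∧
      ∀ x, ⨆ N, ((w x * k N x - (f (k N x)).toReal : ℝ) : EReal) = fstar f (w x) := by
  have : Nonempty {q : ℚ // f q ≠ ⊤} := ⟨⟨1, by simp [hf.at_one]⟩⟩
  obtain ⟨q, hq⟩ := exists_surjective_nat {q : ℚ // f q ≠ ⊤}
  set e : ℕ → ℝ := fun n => (q n : ℚ)
  have he : ∀ n, f (e n) = (f (e n)).toReal := fun n =>
    (EReal.coe_toReal (q n).2 (hf.ne_bot _)).symm
  set φ : ℕ → Ω → ℝ := fun n x => w x * e n - (f (e n)).toReal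
  have hfstar : ∀ x, fstar f (w x) = ⨆ n, (φ n x : EReal) := by
    intro x
    rw [hf.fstar_eq_iSup_rat, ← hq.iSup_comp]
    simp only [φ, EReal.coe_sub, ← he, mul_comm (w x)]
    rfl
  choose σ hσm hσ using exists_measurable_argmax (φ := φ) fun n =>
    (hw.1.mul measurable_const).sub measurable_const
  refine ⟨fun N x => e (σ N x), fun N => ⟨Mb.comp_of_le (hσm N) (fun x => (hσ N x).1) e,
    Mb.comp_of_le (hσm N) (fun x => (hσ N x).1) fun n => (f (e n)).toReal,
    fun x => (q (σ N x)).2⟩, fun x => monotone_nat_of_le_succ fun N =>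
    (hσ (N + 1) x).2 _ ((hσ N x).1.trans N.le_succ), fun x => ?_⟩
  rw [hfstar]
  exact le_antisymm (iSup_le fun N => le_iSup (fun n => (φ n x : EReal)) (σ N x))
    (iSup_le fun n => (EReal.coe_le_coe_iff.2 ((hσ n x).2 n le_rfl)).trans
      (le_iSup (fun N => (φ (σ N x) x : EReal)) n))

section Integral

variable {Ω : Type*} [MeasurableSpace Ω] {P : Measure Ω} [IsFiniteMeasure P]
  {g h w : Ω → ℝ}

lemma exists_coe_le_comp (hf : IsF1 a b f) (hh : h ∈ Mb Ω) :
    ∃ L : ℝ, ∀ x, (L : EReal) ≤ f (h x) := by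
  obtain ⟨-, C, hC⟩ := hh
  obtain ⟨x₀, -, hx₀⟩ := LowerSemicontinuousOn.exists_isMinOn (s := Icc (-|C|) |C|)
    ⟨0, by simp⟩ isCompact_Icc (hf.lsc.lowerSemicontinuousOn _)
  exact ⟨(f x₀).toReal, fun x => (EReal.coe_toReal_le (hf.ne_bot x₀)).trans
    (hx₀ (abs_le.1 ((hC x).trans (le_abs_self C))))⟩

lemma ae_comp_ne_top (hf : IsF1 a b f) (hh : h ∈ Mb Ω)
    (hlt : eIntegral P (fun x => f (h x)) < ⊤) : ∀ᵐ x ∂P, f (h x) ≠ ⊤ :=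
  (hf.exists_coe_le_comp hh).elim fun _ hL =>
    ae_ne_top_of_eIntegral_lt_top (hf.lsc.measurable.comp hh.1) hL hlt

lemma integrable_comp (hf : IsF1 a b f) (hh : h ∈ Mb Ω)
    (hlt : eIntegral P (fun x => f (h x)) < ⊤) : Integrable (fun x => (f (h x)).toReal) P :=
  (hf.exists_coe_le_comp hh).elim fun _ hL =>
    integrable_toReal_of_eIntegral_lt_top (hf.lsc.measurable.comp hh.1) hL hlt

lemma eIntegral_comp (hf : IsF1 a b f) (hh : h ∈ Mb Ω)
    (hlt : eIntegral P (fun x => f (h x)) < ⊤) :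
    eIntegral P (fun x => f (h x)) = ((∫ x, (f (h x)).toReal ∂P : ℝ) : EReal) :=
  (hf.exists_coe_le_comp hh).elim fun _ hL =>
    eIntegral_eq_integral_toReal (hf.lsc.measurable.comp hh.1) hL hlt

lemma integral_mul_sub_eIntegral_le_eIntegral_fstar (hf : IsF1 a b f) (hw : w ∈ Mb Ω)
    (hh : h ∈ Mb Ω) (hlt : eIntegral P (fun x => f (h x)) < ⊤) :
    ((∫ x, w x * h x ∂P : ℝ) : EReal) - eIntegral P (fun x => f (h x)) ≤
      eIntegral P (fun x => fstar f (w x)) := by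
  have hu := hf.integrable_comp hh hlt
  have hwh : Integrable (fun x => w x * h x) P := Mb.integrable (Mb.mul_mem hw hh)
  rw [hf.eIntegral_comp hh hlt, ← EReal.coe_sub, ← integral_sub hwh hu,
    ← eIntegral_coe (u := fun x => w x * h x - (f (h x)).toReal) (hwh.sub hu)]
  refine eIntegral_mono_ae ((hf.ae_comp_ne_top hh hlt).mono fun x hx => ?_)
  dsimp only
  rw [EReal.coe_sub, EReal.coe_toReal hx (hf.ne_bot _), mul_comm]
  exact le_iSup (fun y : ℝ => ((y * w x : ℝ) : EReal) - f y) (h x)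

lemma integral_mul_sub_eIntegral_le (hf : IsF1 a b f) (hg : g ∈ Mb Ω)
    (hh : h ∈ Mb Ω) (h1 : ∫ x, h x ∂P = 1) (hlt : eIntegral P (fun x => f (h x)) < ⊤) (ν : ℝ) :
    ((∫ x, g x * h x ∂P : ℝ) : EReal) - eIntegral P (fun x => f (h x)) ≤
      (ν : EReal) + eIntegral P (fun x => fstar f (g x - ν)) := by
  have hyoung := hf.integral_mul_sub_eIntegral_le_eIntegral_fstar (w := fun x => g x - ν)
    (Mb.sub_mem hg (Mb.const_mem ν)) hh hlt
  have hshift : ∫ x, (g x - ν) * h x ∂P = ∫ x, g x * h x ∂P - ν := by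
    simp_rw [sub_mul]
    rw [integral_sub (Mb.integrable (Mb.mul_mem hg hh) : Integrable (fun x => g x * h x) P)
      ((Mb.integrable hh).const_mul ν), integral_const_mul, h1, mul_one]
  rw [hf.eIntegral_comp hh hlt, ← EReal.coe_sub, hshift] at hyoung
  rw [hf.eIntegral_comp hh hlt, ← EReal.coe_sub]
  calc ((∫ x, g x * h x ∂P - ∫ x, (f (h x)).toReal ∂P : ℝ) : EReal)
      = (ν : EReal) + ((∫ x, g x * h x ∂P - ν - ∫ x, (f (h x)).toReal ∂P : ℝ) : EReal) := by
        rw [← EReal.coe_add]; ring_nf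
    _ ≤ _ := add_le_add le_rfl hyoung

theorem eIntegral_fstar_le (hf : IsF1 a b f) (hw : w ∈ Mb Ω) {c : ℝ}
    (H : ∀ h ∈ Mb Ω, eIntegral P (fun x => f (h x)) < ⊤ →
      ((∫ x, w x * h x ∂P : ℝ) : EReal) - eIntegral P (fun x => f (h x)) ≤ c) :
    eIntegral P (fun x => fstar f (w x)) ≤ c := by
  obtain ⟨k, hk, hmono, hsup⟩ := hf.exists_seq_iSup_eq_fstar hw
  simp_rw [← hsup]
  refine eIntegral_iSup_le (fun N => ?_) hmono fun N => ?_
  · exact Mb.integrable (Mb.sub_mem (Mb.mul_mem hw (hk N).1) (hk N).2.1)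
  obtain ⟨hkN, hfk, hfin⟩ := hk N
  have hE : eIntegral P (fun x => f (k N x)) = ((∫ x, (f (k N x)).toReal ∂P : ℝ) : EReal) := by
    rw [← eIntegral_coe (Mb.integrable hfk)]
    simp only [EReal.coe_toReal (hfin _) (hf.ne_bot _)]
  have := H _ hkN (hE ▸ EReal.coe_lt_top _)
  rwa [hE, ← EReal.coe_sub, EReal.coe_le_coe_iff, ← integral_sub
    (Mb.integrable (Mb.mul_mem hw hkN) : Integrable (fun x => w x * k N x) P)
    (Mb.integrable hfk)] at this

lemma const_mem_admissible (hf : IsF1 a b f) {t : ℝ} (ht : f t ≠ ⊤) :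
    (fun _ : Ω => t) ∈ admissible f P := by
  refine ⟨Mb.const_mem t, ?_⟩
  show eIntegral P (fun _ => f t) < ⊤
  rw [← EReal.coe_toReal ht (hf.ne_bot t), eIntegral_coe (integrable_const _)]
  exact EReal.coe_lt_top _

lemma eIntegral_comp_combo_le (hf : IsF1 a b f) {h₁ h₂ : Ω → ℝ} (hh₁ : h₁ ∈ Mb Ω)
    (hh₂ : h₂ ∈ Mb Ω) (hlt₁ : eIntegral P (fun x => f (h₁ x)) < ⊤)
    (hlt₂ : eIntegral P (fun x => f (h₂ x)) < ⊤) {α β : ℝ} (hα : 0 ≤ α) (hβ : 0 ≤ β)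
    (hαβ : α + β = 1) :
    eIntegral P (fun x => f (α * h₁ x + β * h₂ x)) ≤
      ((α * ∫ x, (f (h₁ x)).toReal ∂P + β * ∫ x, (f (h₂ x)).toReal ∂P : ℝ) : EReal) := by
  have hu₁ := (hf.integrable_comp hh₁ hlt₁).const_mul α
  have hu₂ := (hf.integrable_comp hh₂ hlt₂).const_mul β
  rw [← integral_const_mul, ← integral_const_mul, ← integral_add hu₁ hu₂,
    ← eIntegral_coe (u := fun x => α * (f (h₁ x)).toReal + β * (f (h₂ x)).toReal) (hu₁.add hu₂)]
  exact eIntegral_mono_ae (((hf.ae_comp_ne_top hh₁ hlt₁).and (hf.ae_comp_ne_top hh₂ hlt₂)).mono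
    fun x hx => hf.apply_combo_le hx.1 hx.2 hα hβ hαβ)

lemma concaveOn_integral_mul_sub_eIntegral (hf : IsF1 a b f) (hg : g ∈ Mb Ω) :
    ConcaveOn ℝ (admissible f P)
      (fun h => ∫ x, g x * h x ∂P - (eIntegral P (fun x => f (h x))).toReal) := by
  refine ⟨fun h₁ ⟨hh₁, hlt₁⟩ h₂ ⟨hh₂, hlt₂⟩ α β hα hβ hαβ =>
    ⟨Mb.add_mem (Mb.smul_mem α hh₁) (Mb.smul_mem β hh₂),
      (hf.eIntegral_comp_combo_le hh₁ hh₂ hlt₁ hlt₂ hα hβ hαβ).trans_lt (EReal.coe_lt_top _)⟩,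
    fun h₁ ⟨hh₁, hlt₁⟩ h₂ ⟨hh₂, hlt₂⟩ α β hα hβ hαβ => ?_⟩
  have hle := hf.eIntegral_comp_combo_le hh₁ hh₂ hlt₁ hlt₂ hα hβ hαβ
  have hh : (fun x => α * h₁ x + β * h₂ x) ∈ Mb Ω :=
    Mb.add_mem (Mb.smul_mem α hh₁) (Mb.smul_mem β hh₂)
  have hgh₁ : Integrable (fun x => g x * h₁ x) P := Mb.integrable (Mb.mul_mem hg hh₁)
  have hgh₂ : Integrable (fun x => g x * h₂ x) P := Mb.integrable (Mb.mul_mem hg hh₂)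
  have hint : ∫ x, g x * (α * h₁ x + β * h₂ x) ∂P =
      α * ∫ x, g x * h₁ x ∂P + β * ∫ x, g x * h₂ x ∂P := by
    rw [← integral_const_mul, ← integral_const_mul, ← integral_add (hgh₁.const_mul α)
      (hgh₂.const_mul β)]
    congr 1; funext x; ring
  have hlt := hle.trans_lt (EReal.coe_lt_top _)
  simp only [Pi.add_apply, Pi.smul_apply, smul_eq_mul]
  rw [hf.eIntegral_comp hh hlt, EReal.coe_le_coe_iff] at hle
  rw [hf.eIntegral_comp hh hlt, hf.eIntegral_comp hh₁ hlt₁,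
    hf.eIntegral_comp hh₂ hlt₂, EReal.toReal_coe, EReal.toReal_coe, EReal.toReal_coe, hint]
  linarith

end Integral

section Duality

variable {Ω : Type*} [MeasurableSpace Ω] {P : Measure Ω} [IsProbabilityMeasure P]
  {g : Ω → ℝ}

lemma exists_lagrange_multiplier (hf : IsF1 a b f) (hg : g ∈ Mb Ω) {S : ℝ}
    (hS : ∀ h ∈ Mb Ω, ∫ x, h x ∂P = 1 → eIntegral P (fun x => f (h x)) < ⊤ →
      ((∫ x, g x * h x ∂P : ℝ) : EReal) - eIntegral P (fun x => f (h x)) ≤ S) :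
    ∃ ν : ℝ, ∀ h ∈ Mb Ω, eIntegral P (fun x => f (h x)) < ⊤ →
      ((∫ x, (g x - ν) * h x ∂P : ℝ) : EReal) - eIntegral P (fun x => f (h x)) ≤
        ((S - ν : ℝ) : EReal) := by
  have hm : ∀ h₁ ∈ admissible f P, ∀ h₂ ∈ admissible f P, ∀ α β : ℝ, 0 ≤ α → 0 ≤ β →
      α + β = 1 → ∫ x, (α • h₁ + β • h₂) x ∂P - 1 =
        α * (∫ x, h₁ x ∂P - 1) + β * (∫ x, h₂ x ∂P - 1) := by
    intro h₁ hK₁ h₂ hK₂ α β _ _ hαβ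
    simp only [Pi.add_apply, Pi.smul_apply, smul_eq_mul]
    rw [integral_add ((Mb.integrable hK₁.1).const_mul α) ((Mb.integrable hK₂.1).const_mul β),
      integral_const_mul, integral_const_mul]
    linear_combination hαβ
  have hS' : ∀ h ∈ admissible f P, ∫ x, h x ∂P - 1 = 0 →
      ∫ x, g x * h x ∂P - (eIntegral P (fun x => f (h x))).toReal ≤ S := by
    rintro h ⟨hh, hlt⟩ h1
    have := hS h hh (by linarith) hlt
    rw [hf.eIntegral_comp hh hlt, ← EReal.coe_sub, EReal.coe_le_coe_iff] at this
    rwa [hf.eIntegral_comp hh hlt, EReal.toReal_coe]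
  obtain ⟨l, hal, hl1⟩ := EReal.lt_iff_exists_real_btwn.1 hf.a_lt_one
  obtain ⟨r, h1r, hrb⟩ := EReal.lt_iff_exists_real_btwn.1 hf.one_lt_b
  obtain ⟨ν, hν⟩ := (hf.concaveOn_integral_mul_sub_eIntegral hg).exists_le_add_mul hm hS'
    (hf.const_mem_admissible (hf.finite_on l hal (hl1.trans hf.one_lt_b)))
    (hf.const_mem_admissible (hf.finite_on r (hf.a_lt_one.trans h1r) hrb))
    (by simpa using EReal.coe_lt_coe_iff.1 hl1) (by simpa using EReal.coe_lt_coe_iff.1 h1r)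
  refine ⟨ν, fun h hh hlt => ?_⟩
  have := hν h ⟨hh, hlt⟩
  have hshift : ∫ x, (g x - ν) * h x ∂P = ∫ x, g x * h x ∂P - ν * ∫ x, h x ∂P := by
    simp_rw [sub_mul]
    rw [integral_sub (Mb.integrable (Mb.mul_mem hg hh) : Integrable (fun x => g x * h x) P)
      ((Mb.integrable hh).const_mul ν), integral_const_mul]
  rw [hf.eIntegral_comp hh hlt, EReal.toReal_coe] at this
  rw [hf.eIntegral_comp hh hlt, ← EReal.coe_sub, EReal.coe_le_coe_iff, hshift]
  linarith

theorem iInf_le_of_forall_le (hf : IsF1 a b f) (hg : g ∈ Mb Ω) {S : EReal}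
    (hS : ∀ h ∈ Mb Ω, ∫ x, h x ∂P = 1 → eIntegral P (fun x => f (h x)) < ⊤ →
      ((∫ x, g x * h x ∂P : ℝ) : EReal) - eIntegral P (fun x => f (h x)) ≤ S) :
    ⨅ ν : ℝ, ((ν : EReal) + eIntegral P (fun x => fstar f (g x - ν))) ≤ S := by
  rcases eq_or_ne S ⊤ with rfl | hS_top
  · exact le_top
  have hS_bot : S ≠ ⊥ := by
    have h0 : eIntegral P (fun _ => f 1) = 0 := by
      simpa [hf.at_one] using eIntegral_const (P := P) 0
    have := hS _ (Mb.const_mem 1) (by simp) (h0 ▸ EReal.zero_lt_top)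
    refine ne_bot_of_le_ne_bot ?_ this
    simp [h0]
  lift S to ℝ using ⟨hS_top, hS_bot⟩
  obtain ⟨ν, hν⟩ := hf.exists_lagrange_multiplier hg hS
  calc ⨅ ν : ℝ, ((ν : EReal) + eIntegral P (fun x => fstar f (g x - ν)))
      ≤ (ν : EReal) + eIntegral P (fun x => fstar f (g x - ν)) := iInf_le _ ν
    _ ≤ (ν : EReal) + ((S - ν : ℝ) : EReal) :=
        add_le_add le_rfl (hf.eIntegral_fstar_le (Mb.sub_mem hg (Mb.const_mem ν)) hν)
    _ = S := by rw [← EReal.coe_add, add_sub_cancel]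

end Duality

end IsF1

/-- For `f ∈ F₁(a,b)`, `P` a probability measure and `g` bounded measurable,
`sup {E_P[g·h] - E_P[f(h)] : h ∈ M_b(Ω), E_P[h] = 1, E_P[f(h)] < ∞}`
equals `inf_{ν ∈ ℝ} {ν + E_P[f*(g - ν)]}`. -/
theorem stmt4 {Ω : Type*} [MeasurableSpace Ω] (a b : EReal) (f : ℝ → EReal)
    (hf : IsF1 a b f) (P : Measure Ω) [IsProbabilityMeasure P]
    (g : Ω → ℝ) (hg : g ∈ Mb Ω) :
    (⨆ h ∈ {h : Ω → ℝ | h ∈ Mb Ω ∧ (∫ x, h x ∂P) = 1 ∧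
        eIntegral P (fun x => f (h x)) < ⊤},
      (((∫ x, g x * h x ∂P : ℝ) : EReal) - eIntegral P (fun x => f (h x))))
    = ⨅ ν : ℝ, ((ν : EReal) + eIntegral P (fun x => fstar f (g x - ν))) :=
  le_antisymm
    (le_iInf fun ν => iSup₂_le fun _ ⟨hh, h1, hlt⟩ =>
      hf.integral_mul_sub_eIntegral_le hg hh h1 hlt ν)
    (hf.iInf_le_of_forall_le hg fun h hh h1 hlt =>
      le_iSup₂_of_le (f := fun h (_ : h ∈ {h : Ω → ℝ | h ∈ Mb Ω ∧ (∫ x, h x ∂P) = 1 ∧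
        eIntegral P (fun x => f (h x)) < ⊤}) =>
          (((∫ x, g x * h x ∂P : ℝ) : EReal) - eIntegral P (fun x => f (h x))))
        h ⟨hh, h1, hlt⟩ le_rfl)
end

section
/- Let f ∈ F₁(a,b), let Γ ⊂ M_b(Ω) be nonempty, and let Q, P be probability measures on (Ω,M). Then D_f^Γ(Q‖P) ≤ inf over probability measures η on (Ω,M) of {D_f(η‖P) + W^Γ(Q,η)}. In particular, D_f^Γ(Q‖P) ≤ min{D_f(Q‖P), W^Γ(Q,P)}. -/
open MeasureTheory Filter Set Topology ENNReal
open scoped Classical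

/-!
For every `ν ∈ ℝ` and every probability measure `η ≪ P` with density `ρ = dη/dP`, the
Fenchel–Young inequality `ρ (g - ν) ≤ f(ρ) + f*(g - ν)`, integrated against `P`, gives
`E_η[g] - ν ≤ D_f(η‖P) + E_P[f*(g - ν)]`, i.e. `Λ_f^P[g] ≥ E_η[g] - D_f(η‖P)`. Hence
`E_Q[g] - Λ_f^P[g] ≤ D_f(η‖P) + (E_Q[g] - E_η[g])`, and taking suprema over `g ∈ Γ` gives the
bound. The two special cases are `η = Q` (where `W^Γ(Q,Q) ≤ 0`) and `η = P` (where
`D_f(P‖P) = f(1) = 0`).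
-/

open MeasureTheory

lemma EReal.coe_sub_sub_eq_add_coe_sub (r s : ℝ) (D : EReal) :
    (r : EReal) - ((s : EReal) - D) = D + ((r : EReal) - s) := by
  induction D using EReal.rec with
  | bot => simp
  | coe d => norm_cast; ring
  | top =>
    simp only [EReal.sub_top, EReal.coe_sub_bot]
    rw [← EReal.coe_sub, EReal.top_add_coe]

section PosE

lemma posE_coe (r : ℝ) : posE (r : EReal) = ENNReal.ofReal r := by
  simp [posE]

lemma posE_bot : posE ⊥ = 0 := by
  simp [posE]

lemma posE_eq_top_iff {x : EReal} : posE x = ⊤ ↔ x = ⊤ := by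
  unfold posE
  split <;> simp_all [ENNReal.ofReal_ne_top]

lemma posE_mono : Monotone posE := by
  intro x y h
  induction y using EReal.rec with
  | bot => rw [le_bot_iff.mp h]
  | top => simp [posE]
  | coe t =>
    induction x using EReal.rec with
    | bot => simp [posE_bot]
    | top => exact absurd h (by simp)
    | coe s => simpa [posE_coe] using ENNReal.ofReal_le_ofReal (EReal.coe_le_coe_iff.mp h)

lemma measurable_posE : Measurable posE :=
  Measurable.ite (measurableSet_singleton ⊤) measurable_const
    (ENNReal.measurable_ofReal.comp measurable_ereal_toReal)

lemma posE_neg_le_of_coe_le_add {k : ℝ} {x y : EReal} (hy : y ≠ ⊥)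
    (h : (k : EReal) ≤ x + y) : posE (-x) ≤ posE y + ENNReal.ofReal (-k) := by
  induction y using EReal.rec with
  | bot => exact absurd rfl hy
  | top => simp [posE]
  | coe t =>
    induction x using EReal.rec with
    | bot => simp at h
    | top => simp [posE_bot]
    | coe s =>
      rw [← EReal.coe_neg, posE_coe, posE_coe]
      norm_cast at h
      exact (ENNReal.ofReal_le_ofReal (by linarith)).trans ENNReal.ofReal_add_le

end PosE

section EIntegral

variable {Ω : Type*} [MeasurableSpace Ω] {μ : Measure Ω} {h : Ω → EReal}

lemma coe_ennreal_eq_coe_toReal {A : ℝ≥0∞} (hA : A ≠ ⊤) :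
    (A : EReal) = ((A.toReal : ℝ) : EReal) := by
  lift A to NNReal using hA
  rfl

lemma ae_ne_top_of_lintegral_posE_ne_top (hm : Measurable h)
    (hA : ∫⁻ x, posE (h x) ∂μ ≠ ⊤) : ∀ᵐ x ∂μ, h x ≠ ⊤ := by
  filter_upwards [ae_lt_top (measurable_posE.comp hm) hA] with x hx
  exact fun hx' => hx.ne (posE_eq_top_iff.mpr hx')

lemma eIntegral_eq_top (hA : ∫⁻ x, posE (h x) ∂μ = ⊤) (hB : ∫⁻ x, posE (-h x) ∂μ ≠ ⊤) :
    eIntegral μ h = ⊤ := by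
  rw [eIntegral, hA, coe_ennreal_eq_coe_toReal hB]
  simp

lemma integrable_toReal_and_eIntegral_eq_integral (hm : Measurable h) (hb : ∀ x, h x ≠ ⊥)
    (hA : ∫⁻ x, posE (h x) ∂μ ≠ ⊤) (hB : ∫⁻ x, posE (-h x) ∂μ ≠ ⊤) :
    Integrable (fun x => (h x).toReal) μ ∧
      eIntegral μ h = ((∫ x, (h x).toReal ∂μ : ℝ) : EReal) := by
  have hpos : ∫⁻ x, posE (h x) ∂μ = ∫⁻ x, ENNReal.ofReal (h x).toReal ∂μ := by
    refine lintegral_congr_ae ?_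
    filter_upwards [ae_ne_top_of_lintegral_posE_ne_top hm hA] with x hx
    rw [← EReal.coe_toReal hx (hb x), posE_coe, EReal.toReal_coe]
  have hneg : ∫⁻ x, posE (-h x) ∂μ = ∫⁻ x, ENNReal.ofReal (-(h x).toReal) ∂μ := by
    refine lintegral_congr fun x => ?_
    rw [posE, if_neg (by simpa using hb x), EReal.toReal_neg_eq]
  have hint : Integrable (fun x => (h x).toReal) μ := by
    refine ⟨(measurable_ereal_toReal.comp hm).aestronglyMeasurable, ?_⟩
    rw [hasFiniteIntegral_iff_norm]
    refine (lintegral_mono fun x => ?_).trans_lt (lintegral_add_left ?_ _ ▸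
      ENNReal.add_lt_top.mpr ⟨hpos ▸ hA.lt_top, hneg ▸ hB.lt_top⟩)
    · rw [Real.norm_eq_abs, abs_eq_max_neg, ENNReal.ofReal_max]
      exact max_le le_self_add le_add_self
    · exact ENNReal.measurable_ofReal.comp (measurable_ereal_toReal.comp hm)
  refine ⟨hint, ?_⟩
  rw [eIntegral, integral_eq_lintegral_pos_part_sub_lintegral_neg_part hint, EReal.coe_sub,
    ← hpos, ← hneg, coe_ennreal_eq_coe_toReal hA, coe_ennreal_eq_coe_toReal hB]

lemma eIntegral_congr_ae_s7 {h₁ h₂ : Ω → EReal} (h : h₁ =ᵐ[μ] h₂) :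
    eIntegral μ h₁ = eIntegral μ h₂ := by
  have hpos : (fun x => posE (h₁ x)) =ᵐ[μ] fun x => posE (h₂ x) :=
    h.mono fun x hx => congrArg posE hx
  have hneg : (fun x => posE (-h₁ x)) =ᵐ[μ] fun x => posE (-h₂ x) :=
    h.mono fun x hx => congrArg (fun y => posE (-y)) hx
  rw [eIntegral, eIntegral, lintegral_congr_ae hpos, lintegral_congr_ae hneg]

lemma eIntegral_zero : eIntegral μ (fun _ => (0 : EReal)) = 0 := by
  simp [eIntegral, posE]

/-- Stated with `eIntegral μ h₁` subtracted on the left because the sum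
`eIntegral μ h₁ + eIntegral μ h₂` may be `⊥ + ⊤ = ⊥`. -/
theorem integral_sub_eIntegral_le_eIntegral {k : Ω → ℝ} {h₁ h₂ : Ω → EReal}
    (hk : Integrable k μ) (hm₁ : Measurable h₁) (hm₂ : Measurable h₂)
    (hb₁ : ∀ x, h₁ x ≠ ⊥) (hb₂ : ∀ x, h₂ x ≠ ⊥) (hB₂ : ∫⁻ x, posE (-h₂ x) ∂μ ≠ ⊤)
    (hle : ∀ x, (k x : EReal) ≤ h₁ x + h₂ x) :
    ((∫ x, k x ∂μ : ℝ) : EReal) - eIntegral μ h₁ ≤ eIntegral μ h₂ := by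
  by_cases hA₂ : ∫⁻ x, posE (h₂ x) ∂μ = ⊤
  · rw [eIntegral_eq_top hA₂ hB₂]
    exact le_top
  by_cases hB₁ : ∫⁻ x, posE (-h₁ x) ∂μ = ⊤
  · refine absurd hB₁ (ne_top_of_le_ne_top ?_ (lintegral_mono fun x =>
      posE_neg_le_of_coe_le_add (hb₂ x) (hle x)))
    have hm : Measurable fun x => posE (h₂ x) := measurable_posE.comp hm₂
    rw [lintegral_add_left hm]
    exact ENNReal.add_ne_top.mpr ⟨hA₂, hk.neg.lintegral_lt_top.ne⟩
  by_cases hA₁ : ∫⁻ x, posE (h₁ x) ∂μ = ⊤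
  · rw [eIntegral_eq_top hA₁ hB₁, EReal.sub_top]
    exact bot_le
  obtain ⟨hint₁, heq₁⟩ := integrable_toReal_and_eIntegral_eq_integral hm₁ hb₁ hA₁ hB₁
  obtain ⟨hint₂, heq₂⟩ := integrable_toReal_and_eIntegral_eq_integral hm₂ hb₂ hA₂ hB₂
  have hle_ae : ∀ᵐ x ∂μ, k x ≤ (h₁ x).toReal + (h₂ x).toReal := by
    filter_upwards [ae_ne_top_of_lintegral_posE_ne_top hm₁ hA₁,
      ae_ne_top_of_lintegral_posE_ne_top hm₂ hA₂] with x hx₁ hx₂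
    have := hle x
    rwa [← EReal.coe_toReal hx₁ (hb₁ x), ← EReal.coe_toReal hx₂ (hb₂ x),
      ← EReal.coe_add, EReal.coe_le_coe_iff] at this
  have : ∫ x, k x ∂μ ≤ ∫ x, ((h₁ x).toReal + (h₂ x).toReal) ∂μ :=
    integral_mono_ae hk (hint₁.add hint₂) hle_ae
  rw [integral_add hint₁ hint₂] at this
  rw [heq₁, heq₂, ← EReal.coe_sub, EReal.coe_le_coe_iff]
  linarith

end EIntegral

section Legendre

variable {f : ℝ → EReal}

lemma le_fstar (f : ℝ → EReal) (x y : ℝ) : ((x * y : ℝ) : EReal) - f x ≤ fstar f y :=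
  le_iSup (fun x => ((x * y : ℝ) : EReal) - f x) x

lemma coe_le_fstar (h1 : f 1 = 0) (y : ℝ) : (y : EReal) ≤ fstar f y := by
  simpa [h1] using le_fstar f 1 y

lemma fstar_ne_bot (h1 : f 1 = 0) (y : ℝ) : fstar f y ≠ ⊥ :=
  ne_bot_of_le_ne_bot (EReal.coe_ne_bot y) (coe_le_fstar h1 y)

theorem fenchel_young (hbot : ∀ x, f x ≠ ⊥) (h1 : f 1 = 0) (x y : ℝ) :
    ((x * y : ℝ) : EReal) ≤ f x + fstar f y := by
  by_cases htop : f x = ⊤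
  · rw [htop, EReal.top_add_of_ne_bot (fstar_ne_bot h1 y)]
    exact le_top
  lift f x to ℝ using ⟨htop, hbot x⟩ with c hc
  rw [add_comm, ← EReal.sub_le_iff_le_add (Or.inl (EReal.coe_ne_bot c))
    (Or.inl (EReal.coe_ne_top c)), hc]
  exact le_fstar f x y

lemma lowerSemicontinuous_fstar (f : ℝ → EReal) : LowerSemicontinuous (fstar f) := by
  refine lowerSemicontinuous_iSup fun x => ?_
  refine (continuous_coe_real_ereal.comp (continuous_const.mul continuous_id)).lowerSemicontinuous
    |>.add' lowerSemicontinuous_const fun y => ?_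
  exact EReal.continuousAt_add (Or.inl (EReal.coe_ne_top _)) (Or.inl (EReal.coe_ne_bot _))

lemma lintegral_posE_neg_fstar_ne_top {Ω : Type*} [MeasurableSpace Ω] {μ : Measure Ω}
    (h1 : f 1 = 0) {u : Ω → ℝ} (hu : Integrable u μ) :
    ∫⁻ x, posE (-fstar f (u x)) ∂μ ≠ ⊤ := by
  refine ne_top_of_le_ne_top hu.neg.lintegral_lt_top.ne (lintegral_mono fun x => ?_)
  rw [Pi.neg_apply, ← posE_coe, EReal.coe_neg]
  exact posE_mono (EReal.neg_le_neg_iff.mpr (coe_le_fstar h1 _))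

end Legendre

section Divergences

variable {Ω : Type*} [MeasurableSpace Ω] {f : ℝ → EReal}

lemma fDivE_self (h1 : f 1 = 0) (P : Measure Ω) [SigmaFinite P] : fDivE f P P = 0 := by
  rw [fDivE, if_pos Measure.AbsolutelyContinuous.rfl, ← eIntegral_zero (μ := P)]
  refine eIntegral_congr_ae_s7 ?_
  filter_upwards [Measure.rnDeriv_self P] with x hx
  rw [hx, ENNReal.toReal_one, h1]

lemma ipmW_self_nonpos (Γ : Set (Ω → ℝ)) (Q : Measure Ω) : ipmW Γ Q Q ≤ 0 :=
  iSup₂_le fun g _ => by rw [← EReal.coe_sub, sub_self, EReal.coe_zero]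

theorem integral_sub_fDivE_le_LambdaF (hbot : ∀ x, f x ≠ ⊥) (h1 : f 1 = 0)
    (hfm : Measurable f) {P η : Measure Ω} [IsFiniteMeasure P] [IsProbabilityMeasure η]
    {g : Ω → ℝ} (hg : g ∈ Mb Ω) :
    ((∫ x, g x ∂η : ℝ) : EReal) - fDivE f η P ≤ LambdaF f P g := by
  obtain ⟨hgm, C, hC⟩ := hg
  by_cases hac : η ≪ P
  swap
  · rw [fDivE, if_neg hac, EReal.sub_top]
    exact bot_le
  rw [fDivE, if_pos hac]
  refine le_iInf fun ν => ?_
  set ρ : Ω → ℝ := fun x => (η.rnDeriv P x).toReal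
  have hbdd : ∀ᵐ x ∂P, ‖g x - ν‖ ≤ C + |ν| := .of_forall fun x => by
    rw [Real.norm_eq_abs]
    exact (abs_sub _ _).trans (by linarith [hC x])
  have hgν : Integrable (fun x => g x - ν) P :=
    .of_bound (hgm.sub measurable_const).aestronglyMeasurable _ hbdd
  have hint : Integrable (fun x => ρ x * (g x - ν)) P :=
    Measure.integrable_toReal_rnDeriv.mul_bdd hgν.aestronglyMeasurable hbdd
  have hρg : ∫ x, ρ x * (g x - ν) ∂P = (∫ x, g x ∂η) - ν := by
    have := integral_rnDeriv_smul (f := fun x => g x - ν) hac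
    simp only [smul_eq_mul] at this
    rw [this, integral_sub (.of_bound hgm.aestronglyMeasurable C (.of_forall fun x => hC x))
      (integrable_const ν), integral_const, probReal_univ, one_smul]
  have hfy := integral_sub_eIntegral_le_eIntegral hint
    (hfm.comp (Measure.measurable_rnDeriv η P).ennreal_toReal)
    ((lowerSemicontinuous_fstar f).measurable.comp (hgm.sub measurable_const))
    (fun x => hbot _) (fun x => fstar_ne_bot h1 _) (lintegral_posE_neg_fstar_ne_top h1 hgν)
    (fun x => fenchel_young hbot h1 (ρ x) (g x - ν))
  rw [hρg] at hfy
  calc ((∫ x, g x ∂η : ℝ) : EReal) - eIntegral P (fun x => f (ρ x))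
      = (ν : EReal) + ((((∫ x, g x ∂η) - ν : ℝ) : EReal) - eIntegral P (fun x => f (ρ x))) := by
        rw [sub_eq_add_neg, sub_eq_add_neg, ← add_assoc, ← EReal.coe_add, add_sub_cancel]
    _ ≤ ν + eIntegral P (fun x => fstar f (g x - ν)) := by gcongr; exact hfy

theorem fGammaDiv_le_fDivE_add_ipmW (hbot : ∀ x, f x ≠ ⊥) (h1 : f 1 = 0) (hfm : Measurable f)
    {Γ : Set (Ω → ℝ)} (hΓ : Γ ⊆ Mb Ω) (Q : Measure Ω) {P η : Measure Ω} [IsFiniteMeasure P]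
    [IsProbabilityMeasure η] :
    fGammaDiv f Γ Q P ≤ fDivE f η P + ipmW Γ Q η := by
  refine iSup₂_le fun g hg => ?_
  calc ((∫ x, g x ∂Q : ℝ) : EReal) - LambdaF f P g
      ≤ ((∫ x, g x ∂Q : ℝ) : EReal) - (((∫ x, g x ∂η : ℝ) : EReal) - fDivE f η P) :=
        EReal.sub_le_sub le_rfl (integral_sub_fDivE_le_LambdaF hbot h1 hfm (hΓ hg))
    _ = fDivE f η P + (((∫ x, g x ∂Q : ℝ) : EReal) - ((∫ x, g x ∂η : ℝ) : EReal)) :=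
        EReal.coe_sub_sub_eq_add_coe_sub _ _ _
    _ ≤ fDivE f η P + ipmW Γ Q η := by
        gcongr
        exact le_iSup₂ (f := fun g (_ : g ∈ Γ) =>
          ((∫ x, g x ∂Q : ℝ) : EReal) - ((∫ x, g x ∂η : ℝ) : EReal)) g hg

end Divergences

theorem stmt7_general {Ω : Type*} [MeasurableSpace Ω] (a b : EReal) (f : ℝ → EReal)
    (hf : IsF1 a b f)
    (Γ : Set (Ω → ℝ)) (hΓ : Γ ⊆ Mb Ω)
    (Q P : Measure Ω) [IsProbabilityMeasure Q] [IsProbabilityMeasure P] :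
    fGammaDiv f Γ Q P
      ≤ (⨅ η ∈ {η : Measure Ω | IsProbabilityMeasure η}, (fDivE f η P + ipmW Γ Q η))
    ∧ fGammaDiv f Γ Q P ≤ min (fDivE f Q P) (ipmW Γ Q P) := by
  have bound := fun (η : Measure Ω) (_ : IsProbabilityMeasure η) =>
    fGammaDiv_le_fDivE_add_ipmW hf.ne_bot hf.at_one hf.lsc.measurable hΓ Q (P := P) (η := η)
  refine ⟨le_iInf₂ bound, le_min ?_ ?_⟩
  · calc fGammaDiv f Γ Q P ≤ fDivE f Q P + ipmW Γ Q Q := bound Q inferInstance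
      _ ≤ fDivE f Q P + 0 := by gcongr; exact ipmW_self_nonpos Γ Q
      _ = fDivE f Q P := add_zero _
  · simpa [fDivE_self hf.at_one P] using bound P inferInstance

/-- For `f ∈ F₁(a,b)`, nonempty `Γ ⊆ M_b(Ω)` and probability measures
`Q, P`: `D_f^Γ(Q‖P) ≤ inf_{η probability measure} {D_f(η‖P) + W^Γ(Q,η)}`; in particular
`D_f^Γ(Q‖P) ≤ min{D_f(Q‖P), W^Γ(Q,P)}`. -/
theorem stmt7 {Ω : Type*} [MeasurableSpace Ω] (a b : EReal) (f : ℝ → EReal)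
    (hf : IsF1 a b f)
    (Γ : Set (Ω → ℝ)) (hΓ : Γ ⊆ Mb Ω) (hne : Γ.Nonempty)
    (Q P : Measure Ω) [IsProbabilityMeasure Q] [IsProbabilityMeasure P] :
    fGammaDiv f Γ Q P
      ≤ (⨅ η ∈ {η : Measure Ω | IsProbabilityMeasure η}, (fDivE f η P + ipmW Γ Q η))
    ∧ fGammaDiv f Γ Q P ≤ min (fDivE f Q P) (ipmW Γ Q P) :=
  stmt7_general a b f hf Γ hΓ Q P
end
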